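/- arXiv:1905.02028 — 2 statements merged into one kernel-verified Lean document; each statement's English description precedes it below -/
import Mathlib

section
/- Let Ω ⊂ ℝⁿ be a convex compact set with nonempty interior and M > 0. Then the Newton resistance functional J(u) = ∫_Ω 1/(1 + ‖∇u(x)‖²) dx attains its minimum over the class C_M: there exists a convex function û : Ω → ℝ with −M ≤ û ≤ 0 on Ω such that J(û) ≤ J(u) for every convex function u : Ω → ℝ with −M ≤ u ≤ 0 on Ω. -/
/-
A minimizing sequence in `C_M` has a subsequence converging at every interior point of `Ω`: on a
ball of radius `δ / 2` whose double lies in `Ω`, every member of `C_M` is `4M/δ`-Lipschitz, so the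
sequence is equicontinuous there, and a diagonal argument on a countable dense subset applies.
At a point where all these functions and the limit are differentiable, every cluster point of the
(bounded) gradients is a subgradient of the limit, hence equals its gradient. Convex functions are
differentiable almost everywhere (Rademacher) and the boundary of a convex set is null, so the
gradients converge almost everywhere on `Ω`, and dominated convergence (the integrand lies in
`(0, 1]`) shows that the limit attains the infimum of the resistance.
-/

open Filter Topology Set MeasureTheory InnerProductSpace

section Equicontinuity

variable {X α : Type*}

theorem EquicontinuousAt.cauchySeq_of_mem_closure [TopologicalSpace X] [UniformSpace α]
    {F : ℕ → X → α} {s : Set X} {x : X} (hF : EquicontinuousAt F x)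
    (hs : ∀ y ∈ s, CauchySeq (F · y)) (hx : x ∈ closure s) : CauchySeq (F · x) := by
  refine cauchySeq_iff.2 fun U hU => ?_
  obtain ⟨V, hV, hVsymm, hVU⟩ := comp_comp_symm_mem_uniformity_sets hU
  obtain ⟨y, hys, hxy⟩ := ((mem_closure_iff_frequently.1 hx).and_eventually (hF V hV)).exists
  obtain ⟨N, hN⟩ := cauchySeq_iff.1 (hs y hys) V hV
  exact ⟨N, fun k hk l hl => hVU ⟨F l y, ⟨F k y, hxy k, hN k hk l hl⟩, hVsymm.symm _ _ (hxy l)⟩⟩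

theorem exists_subseq_forall_mem_tendsto_of_countable [PseudoMetricSpace α] {D : Set X}
    (hD : D.Countable) {K : Set α} (hK : IsCompact K) {F : ℕ → X → α}
    (hF : ∀ k, ∀ y ∈ D, F k y ∈ K) :
    ∃ φ : ℕ → ℕ, StrictMono φ ∧ ∀ y ∈ D, ∃ l, Tendsto (fun k => F (φ k) y) atTop (𝓝 l) := by
  have := hD.to_subtype
  obtain ⟨L, -, φ, hφ, hL⟩ := (isCompact_univ_pi fun _ : D => hK).tendsto_subseq
    (x := fun k (y : D) => F k y) fun k y _ => hF k y y.2
  exact ⟨φ, hφ, fun y hy => ⟨L ⟨y, hy⟩, tendsto_pi_nhds.1 hL ⟨y, hy⟩⟩⟩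

theorem exists_subseq_forall_mem_tendsto_of_equicontinuousAt [TopologicalSpace X]
    [TopologicalSpace.PseudoMetrizableSpace X] [PseudoMetricSpace α] {s : Set X}
    (hs : TopologicalSpace.IsSeparable s) {K : Set α} (hK : IsCompact K) {F : ℕ → X → α}
    (hF : ∀ k, ∀ x ∈ s, F k x ∈ K) (hFc : ∀ x ∈ s, EquicontinuousAt F x) :
    ∃ φ : ℕ → ℕ, StrictMono φ ∧ ∀ x ∈ s, ∃ l, Tendsto (fun k => F (φ k) x) atTop (𝓝 l) := by
  obtain ⟨D, hDs, hD, hsD⟩ := hs.exists_countable_dense_subset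
  obtain ⟨φ, hφ, hlim⟩ :=
    exists_subseq_forall_mem_tendsto_of_countable hD hK fun k y hy => hF k y (hDs hy)
  refine ⟨φ, hφ, fun x hx => ?_⟩
  have hcauchy : CauchySeq fun k => F (φ k) x :=
    ((hFc x hx).comp φ).cauchySeq_of_mem_closure
      (fun y hy => (hlim y hy).choose_spec.cauchySeq) (hsD hx)
  obtain ⟨l, -, hl⟩ := cauchySeq_tendsto_of_isComplete hK.isComplete (fun k => hF _ x hx) hcauchy
  exact ⟨l, hl⟩

end Equicontinuity

theorem ConvexOn.limsup {E : Type*} [AddCommGroup E] [Module ℝ E] {s : Set E} {f : ℕ → E → ℝ}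
    (hf : ∀ k, ConvexOn ℝ s (f k)) (hbdd : ∀ x ∈ s, ∃ C, ∀ k, |f k x| ≤ C) :
    ConvexOn ℝ s fun x => Filter.limsup (f · x) atTop := by
  have bdd {g : ℕ → ℝ} {C : ℝ} (h : ∀ k, |g k| ≤ C) :
      IsBoundedUnder (· ≤ ·) atTop g ∧ IsBoundedUnder (· ≥ ·) atTop g :=
    ⟨isBoundedUnder_of ⟨C, fun k => (abs_le.1 (h k)).2⟩,
      isBoundedUnder_of ⟨-C, fun k => (abs_le.1 (h k)).1⟩⟩
  have smul_bdd {x} {C a : ℝ} (hC : ∀ k, |f k x| ≤ C) (ha : 0 ≤ a) :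
      ∀ k, |a * f k x| ≤ a * C := fun k => by
    rw [abs_mul, abs_of_nonneg ha]; exact mul_le_mul_of_nonneg_left (hC k) ha
  have limsup_smul {x} {C a : ℝ} (hC : ∀ k, |f k x| ≤ C) (ha : 0 ≤ a) :
      Filter.limsup (fun k => a * f k x) atTop = a * Filter.limsup (f · x) atTop :=
    ((monotone_mul_left_of_nonneg ha).map_limsup_of_continuousAt (f · x)
      (continuous_const_mul a).continuousAt (bdd hC).1 (bdd hC).2.isCoboundedUnder_le).symm
  refine ⟨(hf 0).1, fun x hx y hy a b ha hb hab => ?_⟩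
  obtain ⟨Cx, hCx⟩ := hbdd x hx
  obtain ⟨Cy, hCy⟩ := hbdd y hy
  obtain ⟨Cz, hCz⟩ := hbdd _ ((hf 0).1 hx hy ha hb hab)
  have hax := bdd (smul_bdd hCx ha)
  have hby := bdd (smul_bdd hCy hb)
  calc Filter.limsup (f · (a • x + b • y)) atTop
      ≤ Filter.limsup (fun k => a * f k x + b * f k y) atTop :=
        limsup_le_limsup (Eventually.of_forall fun k => (hf k).2 hx hy ha hb hab)
          (bdd hCz).2.isCoboundedUnder_le (isBoundedUnder_le_add hax.1 hby.1)
    _ ≤ Filter.limsup (fun k => a * f k x) atTop + Filter.limsup (fun k => b * f k y) atTop :=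
        limsup_add_le hax.2 hax.1 hby.2.isCoboundedUnder_le hby.1
    _ = a * Filter.limsup (f · x) atTop + b * Filter.limsup (f · y) atTop := by
        rw [limsup_smul hCx ha, limsup_smul hCy hb]

section Gradient

variable {E : Type*} [NormedAddCommGroup E] [InnerProductSpace ℝ E] [CompleteSpace E]

theorem ConvexOn.inner_gradient_le_sub {s : Set E} {f : E → ℝ} (hf : ConvexOn ℝ s f) {x y : E}
    (hx : x ∈ s) (hy : y ∈ s) (hd : DifferentiableAt ℝ f x) :
    ⟪gradient f x, y - x⟫_ℝ ≤ f y - f x := by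
  let L : ℝ →ᵃ[ℝ] E := AffineMap.lineMap x y
  have hderiv : HasDerivAt (f ∘ L) (fderiv ℝ f x (y - x)) 0 := by
    have hL : HasDerivAt L (y - x) 0 := AffineMap.hasDerivAt_lineMap
    have hf' : HasFDerivAt f (fderiv ℝ f x) (L 0) := by simpa [L] using hd.hasFDerivAt
    exact hf'.comp_hasDerivAt 0 hL
  have := (hf.comp_affineMap L).deriv_le_slope (x := 0) (y := 1) (by simpa [L]) (by simpa [L])
    one_pos hderiv.differentiableAt
  rw [hderiv.deriv, slope_def_field] at this
  simpa [inner_gradient_left, L] using this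

theorem gradient_eq_of_eventually_inner_le {f : E → ℝ} {x p : E} (hd : DifferentiableAt ℝ f x)
    (h : ∀ᶠ y in 𝓝 x, ⟪p, y - x⟫_ℝ ≤ f y - f x) : gradient f x = p := by
  have hmin : IsLocalMin (fun y => f y - ⟪p, y - x⟫_ℝ) x :=
    h.mono fun y hy => by simp only [sub_self, inner_zero_right, sub_zero]; linarith
  have hderiv : HasFDerivAt (fun y => f y - ⟪p, y - x⟫_ℝ) (fderiv ℝ f x - innerSL ℝ p) x :=
    hd.hasFDerivAt.sub (((innerSL ℝ p).hasFDerivAt).comp x ((hasFDerivAt_id x).sub_const x))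
  have hfderiv : fderiv ℝ f x = innerSL ℝ p := sub_eq_zero.1 (hmin.hasFDerivAt_eq_zero hderiv)
  refine ext_inner_right ℝ fun w => ?_
  rw [inner_gradient_left, hfderiv, innerSL_apply_apply]

end Gradient

section FiniteDimensional

variable {E : Type*} [NormedAddCommGroup E] [InnerProductSpace ℝ E] [FiniteDimensional ℝ E]

theorem tendsto_gradient_of_convexOn {s : Set E} {f : ℕ → E → ℝ} {g : E → ℝ} {x : E} {C : ℝ}
    (hs : s ∈ 𝓝 x) (hf : ∀ k, ConvexOn ℝ s (f k))
    (hlim : ∀ y ∈ s, Tendsto (f · y) atTop (𝓝 (g y)))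
    (hfd : ∀ k, DifferentiableAt ℝ (f k) x) (hgd : DifferentiableAt ℝ g x)
    (hC : ∀ k, ‖gradient (f k) x‖ ≤ C) :
    Tendsto (fun k => gradient (f k) x) atTop (𝓝 (gradient g x)) := by
  refine tendsto_of_subseq_tendsto fun ns hns => ?_
  obtain ⟨p, -, ms, hms, hp⟩ :=
    tendsto_subseq_of_bounded (Metric.isBounded_closedBall (x := 0) (r := C))
      (x := fun i => gradient (f (ns i)) x) fun i => mem_closedBall_zero_iff.2 (hC (ns i))
  have hnms : Tendsto (fun i => ns (ms i)) atTop atTop := hns.comp hms.tendsto_atTop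
  have hsub : ∀ y ∈ s, ⟪p, y - x⟫_ℝ ≤ g y - g x := fun y hy =>
    le_of_tendsto_of_tendsto' (hp.inner tendsto_const_nhds)
      (((hlim y hy).comp hnms).sub ((hlim x (mem_of_mem_nhds hs)).comp hnms))
      fun i => (hf _).inner_gradient_le_sub (mem_of_mem_nhds hs) hy (hfd _)
  rw [gradient_eq_of_eventually_inner_le hgd (eventually_of_mem hs hsub)]
  exact ⟨ms, hp⟩

variable [MeasurableSpace E] [BorelSpace E]

theorem LocallyLipschitzOn.ae_differentiableAt {F : Type*} [NormedAddCommGroup F]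
    [NormedSpace ℝ F] [FiniteDimensional ℝ F] {s : Set E} {f : E → F} (hs : IsOpen s)
    (hf : LocallyLipschitzOn s f) (μ : Measure E) [μ.IsAddHaarMeasure] :
    ∀ᵐ x ∂μ, x ∈ s → DifferentiableAt ℝ f x := by
  have hloc : ∀ x ∈ s, ∃ t, IsOpen t ∧ x ∈ t ∧ ∃ K, LipschitzOnWith K f t := by
    intro x hx
    obtain ⟨K, t, ht, hK⟩ := hf hx
    rw [nhdsWithin_eq_nhds.2 (hs.mem_nhds hx)] at ht
    exact ⟨interior t, isOpen_interior, mem_interior_iff_mem_nhds.2 ht, K,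
      hK.mono interior_subset⟩
  choose! t ht hxt K hK using hloc
  obtain ⟨T, hTs, hT, hsT⟩ := TopologicalSpace.countable_cover_nhdsWithin
    fun x hx => mem_nhdsWithin_of_mem_nhds ((ht x hx).mem_nhds (hxt x hx))
  have hdiff : ∀ x ∈ T, ∀ᵐ y ∂μ, y ∈ t x → DifferentiableAt ℝ f y := fun x hx => by
    filter_upwards [(hK x (hTs hx)).ae_differentiableWithinAt_of_mem] with y hy hyt
    exact (hy hyt).differentiableAt ((ht x (hTs hx)).mem_nhds hyt)
  filter_upwards [(ae_ball_iff hT).2 hdiff] with y hy hys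
  obtain ⟨x, hx, hyx⟩ := mem_iUnion₂.1 (hsT hys)
  exact hy x hx hyx

theorem ConvexOn.ae_differentiableAt_of_mem_interior {s : Set E} {f : E → ℝ}
    (hf : ConvexOn ℝ s f) (μ : Measure E) [μ.IsAddHaarMeasure] :
    ∀ᵐ x ∂μ, x ∈ interior s → DifferentiableAt ℝ f x :=
  hf.locallyLipschitzOn_interior.ae_differentiableAt isOpen_interior μ

end FiniteDimensional

section NewtonClass

open Metric

variable {E : Type*} [NormedAddCommGroup E] [NormedSpace ℝ E]

/-- The admissible class `C_M`. -/
def newtonClass (Ω : Set E) (M : ℝ) : Set (E → ℝ) :=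
  {u | ConvexOn ℝ Ω u ∧ ∀ x ∈ Ω, -M ≤ u x ∧ u x ≤ 0}

namespace newtonClass

variable {Ω : Set E} {M : ℝ} {u : E → ℝ}

theorem abs_apply_le (hu : u ∈ newtonClass Ω M) {x : E} (hx : x ∈ Ω) : |u x| ≤ M := by
  have := hu.2 x hx
  exact abs_le.2 ⟨this.1, by linarith⟩

theorem lipschitzOnWith_ball (hu : u ∈ newtonClass Ω M) {x : E} {δ : ℝ} (hδ : 0 < δ)
    (hball : ball x δ ⊆ Ω) : LipschitzOnWith (4 * M / δ).toNNReal u (ball x (δ / 2)) := by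
  have := (hu.1.subset hball (convex_ball x δ)).lipschitzOnWith_of_abs_le (half_pos hδ)
    (M := M) fun y hy => abs_apply_le hu (hball hy)
  convert this using 2
  · rw [div_div_eq_mul_div]; ring
  · ring

theorem equicontinuousAt {F : ℕ → E → ℝ} (hF : ∀ k, F k ∈ newtonClass Ω M) {x : E}
    (hx : x ∈ interior Ω) : EquicontinuousAt F x := by
  obtain ⟨δ, hδ, hball⟩ := isOpen_iff.1 isOpen_interior x hx
  have hlip := fun k => lipschitzOnWith_ball (hF k) hδ (hball.trans interior_subset)
  have := (LipschitzOnWith.uniformEquicontinuousOn F _ hlip).equicontinuousOn x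
    (mem_ball_self (half_pos hδ))
  rwa [EquicontinuousWithinAt, nhdsWithin_eq_nhds.2 (ball_mem_nhds x (half_pos hδ))] at this

theorem exists_subseq_tendsto [TopologicalSpace.SeparableSpace E]
    {u : ℕ → E → ℝ} (hu : ∀ k, u k ∈ newtonClass Ω M) :
    ∃ φ : ℕ → ℕ, StrictMono φ ∧ ∃ uhat ∈ newtonClass Ω M,
      ∀ x ∈ interior Ω, Tendsto (fun k => u (φ k) x) atTop (𝓝 (uhat x)) := by
  obtain ⟨φ, hφ, hlim⟩ := exists_subseq_forall_mem_tendsto_of_equicontinuousAt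
    (.of_separableSpace (interior Ω)) isCompact_Icc (K := Icc (-M) 0)
    (fun k x hx => (hu k).2 x (interior_subset hx)) fun x hx => equicontinuousAt hu hx
  -- Off the interior the sequence need not converge; its limsup is still convex on all of `Ω`.
  refine ⟨φ, hφ, fun x => limsup (fun k => u (φ k) x) atTop, ⟨?_, fun x hx => ?_⟩, ?_⟩
  · exact ConvexOn.limsup (fun k => (hu (φ k)).1) fun x hx =>
      ⟨M, fun k => abs_apply_le (hu (φ k)) hx⟩
  · have hbdd : IsBoundedUnder (· ≤ ·) atTop fun k => u (φ k) x :=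
      isBoundedUnder_of ⟨0, fun k => ((hu (φ k)).2 x hx).2⟩
    have hcobdd : IsCoboundedUnder (· ≤ ·) atTop fun k => u (φ k) x :=
      (isBoundedUnder_of ⟨-M, fun k => ((hu (φ k)).2 x hx).1⟩).isCoboundedUnder_le
    exact ⟨le_limsup_of_frequently_le (.of_forall fun k => ((hu (φ k)).2 x hx).1) hbdd,
      limsup_le_of_le hcobdd (Eventually.of_forall fun k => ((hu (φ k)).2 x hx).2)⟩
  · intro x hx
    obtain ⟨l, hl⟩ := hlim x hx
    rwa [← hl.limsup_eq] at hl

end newtonClass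

end NewtonClass

section NewtonResistance

variable {E : Type*} [NormedAddCommGroup E] [InnerProductSpace ℝ E] [CompleteSpace E]
  [MeasurableSpace E]

noncomputable def newtonResistance (μ : Measure E) (Ω : Set E) (u : E → ℝ) : ℝ :=
  ∫ x in Ω, 1 / (1 + ‖gradient u x‖ ^ 2) ∂μ

theorem newtonResistance_nonneg (μ : Measure E) (Ω : Set E) (u : E → ℝ) :
    0 ≤ newtonResistance μ Ω u :=
  integral_nonneg fun _ => by positivity

end NewtonResistance

section NewtonClassGradient

open Metric

variable {E : Type*} [NormedAddCommGroup E] [InnerProductSpace ℝ E] {Ω : Set E} {M : ℝ}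

theorem newtonClass.norm_gradient_le [CompleteSpace E] {u : E → ℝ} (hu : u ∈ newtonClass Ω M)
    {x : E} {δ : ℝ} (hδ : 0 < δ) (hball : ball x δ ⊆ Ω) : ‖gradient u x‖ ≤ 4 * M / δ := by
  have hM : 0 ≤ M := (abs_nonneg _).trans (newtonClass.abs_apply_le hu (hball (mem_ball_self hδ)))
  have := norm_fderiv_le_of_lipschitzOn ℝ (ball_mem_nhds x (half_pos hδ))
    (newtonClass.lipschitzOnWith_ball hu hδ hball)
  rwa [Real.coe_toNNReal _ (by positivity), ← (toDual ℝ E).symm.norm_map] at this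

variable [FiniteDimensional ℝ E] [MeasurableSpace E] [BorelSpace E]

theorem newtonClass.ae_tendsto_gradient (μ : Measure E) [μ.IsAddHaarMeasure] {u : ℕ → E → ℝ}
    (hu : ∀ k, u k ∈ newtonClass Ω M) {uhat : E → ℝ} (huhat : ConvexOn ℝ Ω uhat)
    (hlim : ∀ x ∈ interior Ω, Tendsto (u · x) atTop (𝓝 (uhat x))) :
    ∀ᵐ x ∂μ, x ∈ interior Ω →
      Tendsto (fun k => gradient (u k) x) atTop (𝓝 (gradient uhat x)) := by
  filter_upwards [ae_all_iff.2 fun k => (hu k).1.ae_differentiableAt_of_mem_interior μ,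
    huhat.ae_differentiableAt_of_mem_interior μ] with x hdu hdg hx
  obtain ⟨δ, hδ, hball⟩ := isOpen_iff.1 isOpen_interior x hx
  exact tendsto_gradient_of_convexOn (isOpen_interior.mem_nhds hx)
    (fun k => (hu k).1.subset interior_subset huhat.1.interior) hlim (fun k => hdu k hx) (hdg hx)
    fun k => newtonClass.norm_gradient_le (hu k) hδ (hball.trans interior_subset)

theorem tendsto_newtonResistance (μ : Measure E) [μ.IsAddHaarMeasure] (hΩ : μ Ω ≠ ⊤)
    {u : ℕ → E → ℝ} (hu : ∀ k, u k ∈ newtonClass Ω M) {uhat : E → ℝ}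
    (huhat : ConvexOn ℝ Ω uhat) (hlim : ∀ x ∈ interior Ω, Tendsto (u · x) atTop (𝓝 (uhat x))) :
    Tendsto (fun k => newtonResistance μ Ω (u k)) atTop (𝓝 (newtonResistance μ Ω uhat)) := by
  have hcont : Continuous fun p : E => 1 / (1 + ‖p‖ ^ 2) :=
    continuous_const.div (by fun_prop) fun p => by positivity
  have hmeas (v : E → ℝ) :
      AEStronglyMeasurable (fun x => 1 / (1 + ‖gradient v x‖ ^ 2)) (μ.restrict Ω) :=
    (hcont.measurable.comp ((toDual ℝ E).symm.continuous.measurable.comp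
      (measurable_fderiv ℝ v))).aestronglyMeasurable
  have hbound (k : ℕ) : ∀ᵐ x ∂μ.restrict Ω, ‖1 / (1 + ‖gradient (u k) x‖ ^ 2)‖ ≤ 1 :=
    Eventually.of_forall fun x => by
      rw [Real.norm_of_nonneg (by positivity)]
      exact div_le_one_of_le₀ (le_add_of_nonneg_right (by positivity)) (by positivity)
  have hfrontier : ∀ᵐ x ∂μ, x ∉ frontier Ω :=
    measure_eq_zero_iff_ae_notMem.1 (huhat.1.addHaar_frontier μ)
  refine tendsto_integral_of_dominated_convergence (fun _ => 1) (fun k => hmeas _)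
    (integrableOn_const hΩ) hbound ?_
  rw [ae_restrict_iff'₀ (huhat.1.nullMeasurableSet μ)]
  filter_upwards [hfrontier, newtonClass.ae_tendsto_gradient μ hu huhat hlim] with x hx hgrad hxΩ
  exact (hcont.tendsto _).comp (hgrad ((mem_interior_iff_notMem_frontier hxΩ).2 hx))

end NewtonClassGradient

theorem newton_resistance_min_exists_general
    (n : ℕ) (Ω : Set (EuclideanSpace ℝ (Fin n)))
    (hΩconv : Convex ℝ Ω) (hΩcomp : IsCompact Ω)
    (M : ℝ) (hM : 0 < M) :
    ∃ uhat : EuclideanSpace ℝ (Fin n) → ℝ,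
      (ConvexOn ℝ Ω uhat ∧ ∀ x ∈ Ω, -M ≤ uhat x ∧ uhat x ≤ 0) ∧
      ∀ u : EuclideanSpace ℝ (Fin n) → ℝ,
        (ConvexOn ℝ Ω u ∧ ∀ x ∈ Ω, -M ≤ u x ∧ u x ≤ 0) →
        (∫ x in Ω, 1 / (1 + ‖gradient uhat x‖ ^ 2)) ≤
          ∫ x in Ω, 1 / (1 + ‖gradient u x‖ ^ 2) := by
  let J := newtonResistance volume Ω
  have hzero : (0 : EuclideanSpace ℝ (Fin n) → ℝ) ∈ newtonClass Ω M :=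
    ⟨convexOn_const 0 hΩconv, fun _ _ => ⟨by simpa using hM.le, le_rfl⟩⟩
  have hbdd : BddBelow (J '' newtonClass Ω M) :=
    ⟨0, forall_mem_image.2 fun u _ => newtonResistance_nonneg _ _ u⟩
  obtain ⟨m, -, hm, hmJ⟩ := exists_seq_tendsto_sInf ⟨_, mem_image_of_mem J hzero⟩ hbdd
  choose u hu hJu using hmJ
  obtain ⟨φ, hφ, uhat, huhat, hlim⟩ := newtonClass.exists_subseq_tendsto hu
  have hJuhat : J uhat = sInf (J '' newtonClass Ω M) := by
    refine tendsto_nhds_unique (tendsto_newtonResistance volume hΩcomp.measure_lt_top.ne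
      (fun k => hu (φ k)) huhat.1 hlim) ?_
    exact (hm.comp hφ.tendsto_atTop).congr fun k => (hJu (φ k)).symm
  refine ⟨uhat, huhat, fun w hw => ?_⟩
  change J uhat ≤ J w
  exact hJuhat ▸ csInf_le hbdd (mem_image_of_mem J hw)

/-- The Newton resistance functional
`J(u) = ∫_Ω 1/(1 + ‖∇u(x)‖²) dx` attains its minimum over the class `C_M` of convex
functions `u : Ω → ℝ` with `−M ≤ u ≤ 0` on `Ω`. -/
theorem newton_resistance_min_exists
    (n : ℕ) (hn : 1 ≤ n) (Ω : Set (EuclideanSpace ℝ (Fin n)))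
    (hΩconv : Convex ℝ Ω) (hΩcomp : IsCompact Ω) (hΩint : (interior Ω).Nonempty)
    (M : ℝ) (hM : 0 < M) :
    ∃ uhat : EuclideanSpace ℝ (Fin n) → ℝ,
      (ConvexOn ℝ Ω uhat ∧ ∀ x ∈ Ω, -M ≤ uhat x ∧ uhat x ≤ 0) ∧
      ∀ u : EuclideanSpace ℝ (Fin n) → ℝ,
        (ConvexOn ℝ Ω u ∧ ∀ x ∈ Ω, -M ≤ u x ∧ u x ≤ 0) →
        (∫ x in Ω, 1 / (1 + ‖gradient uhat x‖ ^ 2)) ≤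
          ∫ x in Ω, 1 / (1 + ‖gradient u x‖ ^ 2) :=
  newton_resistance_min_exists_general n Ω hΩconv hΩcomp M hM
end

section
/- Let τ > 0 and let x, y ∈ C²([−τ, τ], ℝ) satisfy x(0) = y(0) = ẋ(0) = ẏ(0) = 0. Then for all |t| ≤ τ one has |ẋ(t)² y(t) − x(t) ẏ(t)²| ≤ (2/3) ‖ẍ‖ ‖ÿ‖ ‖ẍ − ÿ‖ t⁴. -/
/-!
Write `A, B, C` for bounds of `|x''|, |y''|, |x'' - y''|`, and integrate from `0` repeatedly:
a bound `|g'(s)| ≤ K |s|ⁿ` together with `g 0 = 0` gives `|g t| ≤ K |t|ⁿ⁺¹ / (n + 1)`.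
Applied to `x`, `y`, `x - y` this gives the Taylor bounds `|x'| ≤ A |s|`, `|x| ≤ A s² / 2`, and
so on. The Wronskian `W = x' y - x y'` has `W' = x'' y - x y'' = y (x'' - y'') - y'' (x - y)`,
so `|W| ≤ B C |t|³ / 3`.
Finally `(x'² y - x y'²)' = 2 x'' W + 2 x y' (x'' - y'') + x' y' (x' - y')` is bounded by
`(2/3 + 1 + 1) A B C |s|³`, and one more integration gives the factor `(8/3) / 4 = 2/3`.
-/

open Set

theorem abs_le_of_abs_deriv_le_mul_pow {S : Set ℝ} (hS : Convex ℝ S) (h0 : (0 : ℝ) ∈ S)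
    {g g' : ℝ → ℝ} {K : ℝ} {n : ℕ} (hg : ∀ s ∈ S, HasDerivWithinAt g (g' s) S s)
    (hg0 : g 0 = 0) (hbound : ∀ s ∈ S, |g' s| ≤ K * |s| ^ n) {t : ℝ} (ht : t ∈ S) :
    |g t| ≤ K * |t| ^ (n + 1) / (n + 1 : ℕ) := by
  -- working with `r ↦ g (r * t)` on `[0, 1]` treats both signs of `t` at once
  have hseg : MapsTo (· * t) (Icc 0 1) S := fun r hr => by
    simpa using hS.smul_mem_of_zero_mem h0 ht hr
  have hderiv : ∀ r ∈ Icc (0 : ℝ) 1,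
      HasDerivWithinAt (fun r => g (r * t)) (g' (r * t) * t) (Icc 0 1) r := fun r hr =>
    (hg _ (hseg hr)).comp r (hasDerivAt_mul_const t).hasDerivWithinAt hseg
  have key := image_norm_le_of_norm_deriv_right_le_deriv_boundary
    (B := fun r => K * |t| ^ (n + 1) * (r ^ (n + 1) / (n + 1)))
    (B' := fun r => K * |t| ^ (n + 1) * r ^ n)
    (fun r hr => (hderiv r hr).continuousWithinAt)
    (fun r hr => (hderiv r (Ico_subset_Icc_self hr)).mono_of_mem_nhdsWithin
      (Icc_mem_nhdsGE_of_mem hr))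
    (by simp [hg0])
    (fun r => by
      refine (((hasDerivAt_pow (n + 1) r).div_const (n + 1 : ℝ)).const_mul
        (K * |t| ^ (n + 1))).congr_deriv ?_
      push_cast
      field_simp)
    (fun r hr => by
      calc ‖g' (r * t) * t‖ = |g' (r * t)| * |t| := by rw [Real.norm_eq_abs, abs_mul]
        _ ≤ K * |r * t| ^ n * |t| := by gcongr; exact hbound _ (hseg (Ico_subset_Icc_self hr))
        _ = K * |t| ^ (n + 1) * r ^ n := by rw [abs_mul, abs_of_nonneg hr.1]; ring)
    (right_mem_Icc.2 zero_le_one)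
  simpa [div_eq_mul_inv, mul_assoc] using key

theorem abs_le_of_abs_deriv2_le {S : Set ℝ} (hS : Convex ℝ S) (h0 : (0 : ℝ) ∈ S)
    {g g' g'' : ℝ → ℝ} {M : ℝ} (hg : ∀ s ∈ S, HasDerivWithinAt g (g' s) S s)
    (hg' : ∀ s ∈ S, HasDerivWithinAt g' (g'' s) S s) (hg0 : g 0 = 0) (hg'0 : g' 0 = 0)
    (hbound : ∀ s ∈ S, |g'' s| ≤ M) {t : ℝ} (ht : t ∈ S) :
    |g' t| ≤ M * |t| ∧ |g t| ≤ M * |t| ^ 2 / 2 := by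
  have h1 : ∀ s ∈ S, |g' s| ≤ M * |s| ^ 1 := fun s hs => by
    simpa using abs_le_of_abs_deriv_le_mul_pow hS h0 hg' hg'0 (n := 0) (by simpa using hbound) hs
  exact ⟨by simpa using h1 t ht, by
    simpa using abs_le_of_abs_deriv_le_mul_pow hS h0 hg hg0 h1 ht⟩

theorem abs_mul_le_of_le {a b P Q : ℝ} (ha : |a| ≤ P) (hb : |b| ≤ Q) : |a * b| ≤ P * Q := by
  rw [abs_mul]
  exact mul_le_mul ha hb (abs_nonneg b) ((abs_nonneg a).trans ha)

theorem abs_mul_sub_mul_le {a b a'' b'' B C r : ℝ} (hb : |b| ≤ B * r ^ 2 / 2)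
    (hb'' : |b''| ≤ B) (hd : |a - b| ≤ C * r ^ 2 / 2) (hd'' : |a'' - b''| ≤ C) :
    |a'' * b - a * b''| ≤ B * C * r ^ 2 :=
  calc |a'' * b - a * b''| = |b * (a'' - b'') - b'' * (a - b)| := by ring_nf
    _ ≤ |b * (a'' - b'')| + |b'' * (a - b)| := abs_sub _ _
    _ ≤ B * r ^ 2 / 2 * C + B * (C * r ^ 2 / 2) :=
      add_le_add (abs_mul_le_of_le hb hd'') (abs_mul_le_of_le hb'' hd)
    _ = B * C * r ^ 2 := by ring

section

variable {S : Set ℝ} {x y x' y' x'' y'' : ℝ → ℝ} {A B C : ℝ}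

theorem abs_wronskian_le (hS : Convex ℝ S) (h0 : (0 : ℝ) ∈ S)
    (hx1 : ∀ s ∈ S, HasDerivWithinAt x (x' s) S s)
    (hx2 : ∀ s ∈ S, HasDerivWithinAt x' (x'' s) S s)
    (hy1 : ∀ s ∈ S, HasDerivWithinAt y (y' s) S s)
    (hy2 : ∀ s ∈ S, HasDerivWithinAt y' (y'' s) S s)
    (hx0 : x 0 = 0) (hy0 : y 0 = 0) (hx'0 : x' 0 = 0) (hy'0 : y' 0 = 0)
    (hB : ∀ s ∈ S, |y'' s| ≤ B) (hC : ∀ s ∈ S, |x'' s - y'' s| ≤ C)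
    {t : ℝ} (ht : t ∈ S) :
    |x' t * y t - x t * y' t| ≤ B * C * |t| ^ 3 / 3 := by
  have hderiv : ∀ s ∈ S, HasDerivWithinAt (fun u => x' u * y u - x u * y' u)
      (x'' s * y s - x s * y'' s) S s := fun s hs =>
    (((hx2 s hs).mul (hy1 s hs)).sub ((hx1 s hs).mul (hy2 s hs))).congr_deriv (by ring)
  have hy := fun s hs => abs_le_of_abs_deriv2_le hS h0 hy1 hy2 hy0 hy'0 hB (t := s) hs
  have hd := fun s hs => abs_le_of_abs_deriv2_le hS h0 (fun s hs => (hx1 s hs).sub (hy1 s hs))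
    (fun s hs => (hx2 s hs).sub (hy2 s hs)) (by simp [hx0, hy0]) (by simp [hx'0, hy'0]) hC
    (t := s) hs
  simpa using abs_le_of_abs_deriv_le_mul_pow hS h0 hderiv (by simp [hx0, hy0]) (n := 2)
    (fun s hs => by simpa using abs_mul_sub_mul_le (hy s hs).2 (hB s hs) (hd s hs).2 (hC s hs)) ht

theorem abs_deriv_sq_mul_sub_mul_deriv_sq_le (hS : Convex ℝ S) (h0 : (0 : ℝ) ∈ S)
    (hx1 : ∀ s ∈ S, HasDerivWithinAt x (x' s) S s)
    (hx2 : ∀ s ∈ S, HasDerivWithinAt x' (x'' s) S s)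
    (hy1 : ∀ s ∈ S, HasDerivWithinAt y (y' s) S s)
    (hy2 : ∀ s ∈ S, HasDerivWithinAt y' (y'' s) S s)
    (hx0 : x 0 = 0) (hy0 : y 0 = 0) (hx'0 : x' 0 = 0) (hy'0 : y' 0 = 0)
    (hA : ∀ s ∈ S, |x'' s| ≤ A) (hB : ∀ s ∈ S, |y'' s| ≤ B)
    (hC : ∀ s ∈ S, |x'' s - y'' s| ≤ C)
    {t : ℝ} (ht : t ∈ S) :
    |x' t ^ 2 * y t - x t * y' t ^ 2| ≤ 2 / 3 * A * B * C * t ^ 4 := by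
  have hderiv : ∀ s ∈ S, HasDerivWithinAt (fun u => x' u ^ 2 * y u - x u * y' u ^ 2)
      (2 * x'' s * (x' s * y s - x s * y' s) + 2 * x s * y' s * (x'' s - y'' s)
        + x' s * y' s * (x' s - y' s)) S s := fun s hs =>
    ((((hx2 s hs).pow 2).mul (hy1 s hs)).sub ((hx1 s hs).mul ((hy2 s hs).pow 2))).congr_deriv
      (by simp only [Pi.pow_apply]; ring)
  have hbound : ∀ s ∈ S, |2 * x'' s * (x' s * y s - x s * y' s)
      + 2 * x s * y' s * (x'' s - y'' s) + x' s * y' s * (x' s - y' s)|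
        ≤ 8 / 3 * A * B * C * |s| ^ 3 := fun s hs => by
    obtain ⟨hx', hx⟩ := abs_le_of_abs_deriv2_le hS h0 hx1 hx2 hx0 hx'0 hA hs
    obtain ⟨hy', -⟩ := abs_le_of_abs_deriv2_le hS h0 hy1 hy2 hy0 hy'0 hB hs
    obtain ⟨hd', -⟩ := abs_le_of_abs_deriv2_le hS h0 (fun s hs => (hx1 s hs).sub (hy1 s hs))
      (fun s hs => (hx2 s hs).sub (hy2 s hs)) (by simp [hx0, hy0]) (by simp [hx'0, hy'0]) hC hs
    have hW := abs_wronskian_le hS h0 hx1 hx2 hy1 hy2 hx0 hy0 hx'0 hy'0 hB hC hs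
    calc _ ≤ |2 * x'' s * (x' s * y s - x s * y' s)| + |2 * x s * y' s * (x'' s - y'' s)|
          + |x' s * y' s * (x' s - y' s)| := abs_add_three _ _ _
      _ ≤ 2 * A * (B * C * |s| ^ 3 / 3) + 2 * (A * |s| ^ 2 / 2) * (B * |s|) * C
          + A * |s| * (B * |s|) * (C * |s|) := by
        gcongr ?_ + ?_ + ?_
        · exact abs_mul_le_of_le (abs_mul_le_of_le abs_two.le (hA s hs)) hW
        · exact abs_mul_le_of_le (abs_mul_le_of_le (abs_mul_le_of_le abs_two.le hx) hy') (hC s hs)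
        · exact abs_mul_le_of_le (abs_mul_le_of_le hx' hy') hd'
      _ = 8 / 3 * A * B * C * |s| ^ 3 := by ring
  have := abs_le_of_abs_deriv_le_mul_pow hS h0 hderiv (by simp [hx0, hy0]) hbound ht
  rw [pow_abs, abs_of_nonneg (by positivity : (0 : ℝ) ≤ t ^ 4)] at this
  linarith

end

theorem key_estimate_numerator_general
    (τ : ℝ)
    (x y x' y' x'' y'' : ℝ → ℝ)
    (hx1 : ∀ t ∈ Set.Icc (-τ) τ, HasDerivWithinAt x (x' t) (Set.Icc (-τ) τ) t)
    (hx2 : ∀ t ∈ Set.Icc (-τ) τ, HasDerivWithinAt x' (x'' t) (Set.Icc (-τ) τ) t)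
    (hy1 : ∀ t ∈ Set.Icc (-τ) τ, HasDerivWithinAt y (y' t) (Set.Icc (-τ) τ) t)
    (hy2 : ∀ t ∈ Set.Icc (-τ) τ, HasDerivWithinAt y' (y'' t) (Set.Icc (-τ) τ) t)
    (hcx : ContinuousOn x'' (Set.Icc (-τ) τ))
    (hcy : ContinuousOn y'' (Set.Icc (-τ) τ))
    (hx0 : x 0 = 0) (hy0 : y 0 = 0) (hx'0 : x' 0 = 0) (hy'0 : y' 0 = 0) :
    ∀ t ∈ Set.Icc (-τ) τ,
      |x' t ^ 2 * y t - x t * y' t ^ 2| ≤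
        (2 / 3) * sSup ((fun s => |x'' s|) '' Set.Icc (-τ) τ) *
          sSup ((fun s => |y'' s|) '' Set.Icc (-τ) τ) *
          sSup ((fun s => |x'' s - y'' s|) '' Set.Icc (-τ) τ) * t ^ 4 := by
  intro t ht
  have h0 : (0 : ℝ) ∈ Icc (-τ) τ := ⟨by linarith [ht.1, ht.2], by linarith [ht.1, ht.2]⟩
  have hsup {f : ℝ → ℝ} (hf : ContinuousOn f (Icc (-τ) τ)) :
      ∀ s ∈ Icc (-τ) τ, |f s| ≤ sSup ((fun s => |f s|) '' Icc (-τ) τ) := fun s hs =>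
    le_csSup (isCompact_Icc.bddAbove_image hf.abs) (mem_image_of_mem _ hs)
  exact abs_deriv_sq_mul_sub_mul_deriv_sq_le (convex_Icc (-τ) τ) h0 hx1 hx2 hy1 hy2
    hx0 hy0 hx'0 hy'0 (hsup hcx) (hsup hcy) (hsup (hcx.sub hcy)) ht

/-- For `x, y ∈ C²[−τ, τ]` with `x(0) = y(0) = ẋ(0) = ẏ(0) = 0`, one has
`|ẋ(t)² y(t) − x(t) ẏ(t)²| ≤ (2/3) ‖ẍ‖ ‖ÿ‖ ‖ẍ − ÿ‖ t⁴` for all `|t| ≤ τ`. -/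
theorem key_estimate_numerator
    (τ : ℝ) (hτ : 0 < τ)
    (x y x' y' x'' y'' : ℝ → ℝ)
    (hx1 : ∀ t ∈ Set.Icc (-τ) τ, HasDerivWithinAt x (x' t) (Set.Icc (-τ) τ) t)
    (hx2 : ∀ t ∈ Set.Icc (-τ) τ, HasDerivWithinAt x' (x'' t) (Set.Icc (-τ) τ) t)
    (hy1 : ∀ t ∈ Set.Icc (-τ) τ, HasDerivWithinAt y (y' t) (Set.Icc (-τ) τ) t)
    (hy2 : ∀ t ∈ Set.Icc (-τ) τ, HasDerivWithinAt y' (y'' t) (Set.Icc (-τ) τ) t)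
    (hcx : ContinuousOn x'' (Set.Icc (-τ) τ))
    (hcy : ContinuousOn y'' (Set.Icc (-τ) τ))
    (hx0 : x 0 = 0) (hy0 : y 0 = 0) (hx'0 : x' 0 = 0) (hy'0 : y' 0 = 0) :
    ∀ t ∈ Set.Icc (-τ) τ,
      |x' t ^ 2 * y t - x t * y' t ^ 2| ≤
        (2 / 3) * sSup ((fun s => |x'' s|) '' Set.Icc (-τ) τ) *
          sSup ((fun s => |y'' s|) '' Set.Icc (-τ) τ) *
          sSup ((fun s => |x'' s - y'' s|) '' Set.Icc (-τ) τ) * t ^ 4 :=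
  key_estimate_numerator_general τ x y x' y' x'' y'' hx1 hx2 hy1 hy2 hcx hcy hx0 hy0 hx'0 hy'0
end
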